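/- Let f be analytic on the unit disk D with f' never zero and Re{1 + z f''(z)/f'(z)} ≥ 0 on D. If there exists ζ₀ ∈ D with f''(ζ₀) ≠ 0 and |ζ₀ + 2f'(ζ₀)/f''(ζ₀)| = 1, then the function φ(z) = f''(z)/(2f'(z) + z f''(z)) is a constant of modulus 1 on D. -/

import Mathlib

open Complex Metric Set

/-!
With `p = 1 + z f''/f'` (so `Re p ≥ 0`), the function `φ = f''/(2f' + z f'')` satisfies
`z φ(z) = (p - 1)/(p + 1)`, which lies in the closed unit disk. By the Schwarz lemma applied
to `z φ(z)`, `|φ| ≤ 1` on the disk. The hypothesis at `ζ₀` says `|φ(ζ₀)| = 1`, because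
`ζ₀ + 2f'(ζ₀)/f''(ζ₀) = 1/φ(ζ₀)`, so by the maximum modulus principle `φ` is constant.
-/

theorem Complex.norm_sub_one_le_norm_add_one {p : ℂ} (hp : 0 ≤ p.re) : ‖p - 1‖ ≤ ‖p + 1‖ := by
  rw [← sq_le_sq₀ (norm_nonneg _) (norm_nonneg _), ← normSq_eq_norm_sq, ← normSq_eq_norm_sq]
  simp only [normSq_apply, sub_re, sub_im, add_re, add_im, one_re, one_im]
  nlinarith

theorem Complex.norm_sub_one_div_add_one_le_one {p : ℂ} (hp : 0 ≤ p.re) :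
    ‖(p - 1) / (p + 1)‖ ≤ 1 := by
  rw [norm_div]
  exact div_le_one_of_le₀ (norm_sub_one_le_norm_add_one hp) (norm_nonneg _)

section Pointwise

variable {a b z : ℂ}

theorem two_mul_add_mul_eq (ha : a ≠ 0) :
    2 * a + z * b = a * ((1 + z * (b / a)) + 1) := by
  field_simp
  ring

theorem two_mul_add_mul_ne_zero (ha : a ≠ 0) (hp : 0 ≤ (1 + z * (b / a)).re) :
    2 * a + z * b ≠ 0 := by
  rw [two_mul_add_mul_eq ha]
  refine mul_ne_zero ha fun h => ?_
  have := congrArg re h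
  simp only [add_re, one_re, zero_re] at this hp
  linarith

theorem mul_div_two_mul_add_mul (ha : a ≠ 0) :
    z * (b / (2 * a + z * b)) = ((1 + z * (b / a)) - 1) / ((1 + z * (b / a)) + 1) := by
  rw [two_mul_add_mul_eq ha, div_mul_eq_div_div, add_sub_cancel_left, mul_div_assoc]

theorem div_two_mul_add_mul_eq_inv (hb : b ≠ 0) :
    b / (2 * a + z * b) = (z + 2 * a / b)⁻¹ := by
  rw [← inv_div]
  congr 1
  field_simp
  ring

end Pointwise

theorem norm_le_div_of_norm_sub_smul_le {E : Type*} [NormedAddCommGroup E] [NormedSpace ℂ E]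
    {φ : ℂ → E} {c : ℂ} {R₁ R₂ : ℝ} (hφ : DifferentiableOn ℂ φ (ball c R₁))
    (h : ∀ z ∈ ball c R₁, ‖(z - c) • φ z‖ ≤ R₂) {z : ℂ} (hz : z ∈ ball c R₁) :
    ‖φ z‖ ≤ R₂ / R₁ := by
  set g : ℂ → E := fun w => (w - c) • φ w
  have hg : DifferentiableOn ℂ g (ball c R₁) := (differentiableOn_id.sub_const c).smul hφ
  have hmaps : MapsTo g (ball c R₁) (closedBall (g c) R₂) := fun w hw => by
    simpa [g] using h w hw
  have hslope : dslope g c z = φ z := by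
    rcases eq_or_ne z c with rfl | hne
    · have hφz := (hφ.differentiableAt (isOpen_ball.mem_nhds hz)).hasDerivAt
      have hg' : HasDerivAt g (φ z) z := by
        convert ((hasDerivAt_id z).sub_const z).smul hφz using 1
        · rfl
        · simp
      rw [dslope_same, hg'.deriv]
    · exact dslope_sub_smul_of_ne φ hne
  rw [← hslope]
  exact norm_dslope_le_div_of_mapsTo_ball hg hmaps hz

/-- If `f` is convex on the unit disk and the pole of a single BMA lies on the
unit circle, then `φ = f''/(2f' + z f'')` is a unimodular constant. -/
theorem pole_on_boundary_implies_halfplane (f : ℂ → ℂ)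
    (hf : ∀ z ∈ ball (0 : ℂ) 1, AnalyticAt ℂ f z)
    (hf' : ∀ z ∈ ball (0 : ℂ) 1, deriv f z ≠ 0)
    (hconv : ∀ z ∈ ball (0 : ℂ) 1,
      0 ≤ (1 + z * (deriv (deriv f) z / deriv f z)).re)
    (ζ₀ : ℂ) (hζ₀ : ζ₀ ∈ ball (0 : ℂ) 1) (hf''ζ₀ : deriv (deriv f) ζ₀ ≠ 0)
    (hone : ‖ζ₀ + 2 * deriv f ζ₀ / deriv (deriv f) ζ₀‖ = 1) :
    ∃ c : ℂ, ‖c‖ = 1 ∧ ∀ z ∈ ball (0 : ℂ) 1,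
      deriv (deriv f) z / (2 * deriv f z + z * deriv (deriv f) z) = c := by
  set φ : ℂ → ℂ := fun z => deriv (deriv f) z / (2 * deriv f z + z * deriv (deriv f) z)
  have hf₁ : AnalyticOnNhd ℂ (deriv f) (ball 0 1) := AnalyticOnNhd.deriv hf
  have hden : ∀ z ∈ ball (0 : ℂ) 1, 2 * deriv f z + z * deriv (deriv f) z ≠ 0 :=
    fun z hz => two_mul_add_mul_ne_zero (hf' z hz) (hconv z hz)
  have hφ : DifferentiableOn ℂ φ (ball 0 1) :=
    hf₁.deriv.differentiableOn.div ((hf₁.differentiableOn.const_mul 2).add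
      (differentiableOn_id.mul hf₁.deriv.differentiableOn)) hden
  have hle : ∀ z ∈ ball (0 : ℂ) 1, ‖φ z‖ ≤ 1 := fun z hz => by
    simpa using norm_le_div_of_norm_sub_smul_le hφ (fun w hw => by
      simpa [φ, mul_div_two_mul_add_mul (hf' w hw)] using
        norm_sub_one_div_add_one_le_one (hconv w hw)) hz
  have hφζ₀ : ‖φ ζ₀‖ = 1 := by
    simp only [φ, div_two_mul_add_mul_eq_inv hf''ζ₀, norm_inv, hone, inv_one]
  have hmax : IsMaxOn (norm ∘ φ) (ball 0 1) ζ₀ := fun z hz => by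
    simpa [hφζ₀] using hle z hz
  exact ⟨φ ζ₀, hφζ₀, eqOn_of_isPreconnected_of_isMaxOn_norm
    (convex_ball 0 1).isPreconnected isOpen_ball hφ hζ₀ hmax⟩
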